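/- arXiv:1812.01317 — 2 statements merged into one kernel-verified Lean document; each statement's English description precedes it below -/
import Mathlib

section
/- Let ((M_n)_{n<ω}, η, (μ^{nk})) be a depth-1 graded monad on Set. Then for every n < ω and every set X, the M₁-algebra with carriers (M_nX, μ^{0n}_X) and (M_{n+1}X, μ^{0,n+1}_X) and main structure map μ^{1n}_X: M₁M_nX → M_{n+1}X is canonical. -/
universe u

/-- A functor on `Set` (i.e. on `Type u`), given by its action on objects and maps. -/
structure SetFunctor : Type (u + 1) where
  obj : Type u → Type u
  map : ∀ {X Y : Type u}, (X → Y) → obj X → obj Y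
  map_id : ∀ X : Type u, map (id : X → X) = id
  map_comp : ∀ {X Y Z : Type u} (f : X → Y) (g : Y → Z), map (g ∘ f) = map g ∘ map f

/-- A (ℕ-)graded monad on `Set`: functors `Mₙ`, a unit `η : Id → M₀` and
multiplications `μ^{nk} : MₙMₖ → M_{n+k}` subject to the unit and associativity laws
of graded monads. -/
structure GradedMonad : Type (u + 1) where
  M : ℕ → SetFunctor.{u}
  unit : ∀ X : Type u, X → (M 0).obj X
  unit_nat : ∀ {X Y : Type u} (f : X → Y), (M 0).map f ∘ unit X = unit Y ∘ f
  mult : ∀ (n k : ℕ) (X : Type u), (M n).obj ((M k).obj X) → (M (n + k)).obj X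
  mult_nat : ∀ (n k : ℕ) {X Y : Type u} (f : X → Y),
      (M (n + k)).map f ∘ mult n k X = mult n k Y ∘ (M n).map ((M k).map f)
  unit_left : ∀ (n : ℕ) (X : Type u),
      cast (congrArg (fun i => (M i).obj X) (Nat.zero_add n)) ∘
          mult 0 n X ∘ unit ((M n).obj X)
        = id
  unit_right : ∀ (n : ℕ) (X : Type u), mult n 0 X ∘ (M n).map (unit X) = id
  assoc : ∀ (n k m : ℕ) (X : Type u),
      mult n (k + m) X ∘ (M n).map (mult k m X)
        = cast (congrArg (fun i => (M i).obj X) (Nat.add_assoc n k m)) ∘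
            mult (n + k) m X ∘ mult n k ((M m).obj X)

namespace GradedMonad

variable (Mo : GradedMonad.{u})

/-- Transport along an equality of grades. -/
def castM {m n : ℕ} (h : m = n) (X : Type u) : (Mo.M m).obj X → (Mo.M n).obj X :=
  cast (congrArg (fun i => (Mo.M i).obj X) h)

/-- The `M₀`-algebra structure `μ^{0n}` on `MₙX`. -/
def mult0 (n : ℕ) (X : Type u) : (Mo.M 0).obj ((Mo.M n).obj X) → (Mo.M n).obj X :=
  Mo.castM (Nat.zero_add n) X ∘ Mo.mult 0 n X

/-- An Eilenberg-Moore algebra for the monad `M₀`. -/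
structure M0Algebra : Type (u + 1) where
  carrier : Type u
  str : (Mo.M 0).obj carrier → carrier
  str_unit : str ∘ Mo.unit carrier = id
  str_mult : str ∘ (Mo.M 0).map str = str ∘ Mo.mult 0 0 carrier

/-- `M₀`-algebra homomorphisms. -/
def IsM0Hom (A B : M0Algebra Mo) (f : A.carrier → B.carrier) : Prop :=
  f ∘ A.str = B.str ∘ (Mo.M 0).map f

/-- An `M₁`-algebra: `M₀`-algebras `A₀`, `A₁` together with a main structure map
`a¹⁰ : M₁A₀ → A₁` satisfying homomorphy and coequalization. -/
structure M1Algebra : Type (u + 1) where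
  A0 : M0Algebra Mo
  A1 : M0Algebra Mo
  a10 : (Mo.M 1).obj A0.carrier → A1.carrier
  homomorphy : a10 ∘ Mo.mult0 1 A0.carrier = A1.str ∘ (Mo.M 0).map a10
  coequalization : a10 ∘ Mo.mult 1 0 A0.carrier = a10 ∘ (Mo.M 1).map A0.str

/-- An `M₁`-algebra is canonical if it is free over its `0`-part w.r.t. the `0`-part
functor: every `M₀`-homomorphism `f : A₀ → B₀` into the `0`-part of an `M₁`-algebra
`B` extends uniquely to an `M₁`-algebra morphism, i.e. there is a unique
`M₀`-homomorphism `g : A₁ → B₁` with `g ∘ a¹⁰ = b¹⁰ ∘ M₁f`. -/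
def M1Algebra.IsCanonical (A : M1Algebra Mo) : Prop :=
  ∀ (B : M1Algebra Mo) (f : A.A0.carrier → B.A0.carrier),
    Mo.IsM0Hom A.A0 B.A0 f →
    ∃! g : A.A1.carrier → B.A1.carrier,
      Mo.IsM0Hom A.A1 B.A1 g ∧ g ∘ A.a10 = B.a10 ∘ (Mo.M 1).map f

/-- A graded monad on `Set` is depth-1 if for every `n` the diagram
`M₁M₀Mₙ ⇉ M₁Mₙ → M_{1+n}` (parallel maps `M₁μ^{0n}` and `μ^{10}Mₙ`, cocone `μ^{1n}`)
is objectwise a coequalizer in the Eilenberg-Moore category of `M₀`-algebras. -/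
def Depth1 : Prop :=
  ∀ (n : ℕ) (X : Type u),
    (Mo.mult 1 n X ∘ (Mo.M 1).map (Mo.mult0 n X)
        = Mo.mult 1 n X ∘ Mo.mult 1 0 ((Mo.M n).obj X)) ∧
    ∀ (D : M0Algebra Mo) (h : (Mo.M 1).obj ((Mo.M n).obj X) → D.carrier),
      (h ∘ Mo.mult0 1 ((Mo.M n).obj X) = D.str ∘ (Mo.M 0).map h) →
      (h ∘ (Mo.M 1).map (Mo.mult0 n X) = h ∘ Mo.mult 1 0 ((Mo.M n).obj X)) →
      ∃! g : (Mo.M (1 + n)).obj X → D.carrier,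
        (g ∘ Mo.mult0 (1 + n) X = D.str ∘ (Mo.M 0).map g) ∧
        g ∘ Mo.mult 1 n X = h

end GradedMonad

open GradedMonad

namespace GradedMonad

variable (Mo : GradedMonad.{u})

theorem castM_castM {a b c : ℕ} (h1 : a = b) (h2 : b = c) (X : Type u)
    (x : (Mo.M a).obj X) :
    Mo.castM h2 X (Mo.castM h1 X x) = Mo.castM (h1.trans h2) X x := by
  subst h1; subst h2; rfl

theorem castM_self {a : ℕ} (h : a = a) (X : Type u) (x : (Mo.M a).obj X) :
    Mo.castM h X x = x := rfl

theorem castM_nat {m n : ℕ} (h : m = n) {X Y : Type u} (f : X → Y)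
    (x : (Mo.M m).obj X) :
    Mo.castM h Y ((Mo.M m).map f x) = (Mo.M n).map f (Mo.castM h X x) := by
  subst h; rfl

/-- Naturality of `mult0`. -/
theorem mult0_nat (n : ℕ) {X Y : Type u} (f : X → Y)
    (x : (Mo.M 0).obj ((Mo.M n).obj X)) :
    (Mo.M n).map f (Mo.mult0 n X x) = Mo.mult0 n Y ((Mo.M 0).map ((Mo.M n).map f) x) := by
  unfold mult0
  simp only [Function.comp_apply]
  rw [← Mo.castM_nat (Nat.zero_add n) f]
  have := congrFun (Mo.mult_nat 0 n f) x
  simp only [Function.comp_apply] at this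
  rw [this]

end GradedMonad

/-- For a depth-1 graded monad on `Set`, for every `n` and every set `X`, the data
consisting of the `M₀`-algebras `(MₙX, μ^{0n}_X)` and `(M_{1+n}X, μ^{0,1+n}_X)` with
main structure map `μ^{1n}_X : M₁MₙX → M_{1+n}X` is an `M₁`-algebra (first two
conjuncts: homomorphy and coequalization) and it is canonical, i.e. free over its
`0`-part (third conjunct). -/
theorem multiplication_M1Algebra_canonical (Mo : GradedMonad.{u}) (hd : Mo.Depth1)
    (n : ℕ) (X : Type u) :
    (Mo.mult 1 n X ∘ Mo.mult0 1 ((Mo.M n).obj X)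
        = Mo.mult0 (1 + n) X ∘ (Mo.M 0).map (Mo.mult 1 n X)) ∧
    (Mo.mult 1 n X ∘ Mo.mult 1 0 ((Mo.M n).obj X)
        = Mo.mult 1 n X ∘ (Mo.M 1).map (Mo.mult0 n X)) ∧
    (∀ (B : M1Algebra Mo) (f : (Mo.M n).obj X → B.A0.carrier),
      (f ∘ Mo.mult0 n X = B.A0.str ∘ (Mo.M 0).map f) →
      ∃! g : (Mo.M (1 + n)).obj X → B.A1.carrier,
        (g ∘ Mo.mult0 (1 + n) X = B.A1.str ∘ (Mo.M 0).map g) ∧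
        g ∘ Mo.mult 1 n X = B.a10 ∘ (Mo.M 1).map f) := by
  refine ⟨?_, (hd n X).1.symm, ?_⟩
  · -- homomorphy
    funext x
    show Mo.mult 1 n X (Mo.mult0 1 ((Mo.M n).obj X) x)
        = Mo.mult0 (1 + n) X ((Mo.M 0).map (Mo.mult 1 n X) x)
    have ha := congrFun (Mo.assoc 0 1 n X) x
    simp only [Function.comp_apply] at ha
    -- RHS = castM (zero_add (1+n)) (mult 0 (1+n) (map (mult 1 n) x))
    show Mo.mult 1 n X (Mo.mult0 1 ((Mo.M n).obj X) x)
        = Mo.castM (Nat.zero_add (1 + n)) X (Mo.mult 0 (1 + n) X ((Mo.M 0).map (Mo.mult 1 n X) x))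
    rw [ha]
    show Mo.mult 1 n X (Mo.mult 0 1 ((Mo.M n).obj X) x)
        = Mo.castM (Nat.zero_add (1 + n)) X
            (Mo.castM (Nat.add_assoc 0 1 n) X (Mo.mult 1 n X (Mo.mult 0 1 ((Mo.M n).obj X) x)))
    rw [Mo.castM_castM, Mo.castM_self]
  · -- canonicity
    intro B f hf
    have hcoeq : (B.a10 ∘ (Mo.M 1).map f) ∘ (Mo.M 1).map (Mo.mult0 n X)
        = (B.a10 ∘ (Mo.M 1).map f) ∘ Mo.mult 1 0 ((Mo.M n).obj X) := by
      funext x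
      simp only [Function.comp_apply]
      have h1 : (Mo.M 1).map f ((Mo.M 1).map (Mo.mult0 n X) x)
          = (Mo.M 1).map (f ∘ Mo.mult0 n X) x := by
        rw [(Mo.M 1).map_comp]; rfl
      rw [h1, hf, (Mo.M 1).map_comp]
      have h2 := congrFun B.coequalization ((Mo.M 1).map ((Mo.M 0).map f) x)
      simp only [Function.comp_apply] at h2
      rw [Function.comp_apply, ← h2]
      have h3 := congrFun (Mo.mult_nat 1 0 f) x
      simp only [Function.comp_apply] at h3
      rw [← h3]
    have hhom : (B.a10 ∘ (Mo.M 1).map f) ∘ Mo.mult0 1 ((Mo.M n).obj X)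
        = B.A1.str ∘ (Mo.M 0).map (B.a10 ∘ (Mo.M 1).map f) := by
      funext x
      simp only [Function.comp_apply]
      rw [Mo.mult0_nat 1 f x]
      have h1 := congrFun B.homomorphy ((Mo.M 0).map ((Mo.M 1).map f) x)
      simp only [Function.comp_apply] at h1
      rw [h1]
      congr 1
      rw [(Mo.M 0).map_comp]; rfl
    exact (hd n X).2 B.A1 (B.a10 ∘ (Mo.M 1).map f) hhom hcoeq
end

section
/- Let γ: X → 𝒫ω(𝒜×X) be a finitely branching LTS over a finite action set 𝒜. Define maps Rₙ from X to subsets of ((𝒫ω𝒜×𝒜)ⁿ) ⊎ ((𝒫ω𝒜×𝒜)^{<n}) recursively by: R₀(x) = {ε} (the empty word in the first summand); Rₙ₊₁(x) = {ε} (the empty word, in the terminated summand (𝒫ω𝒜×𝒜)^{<n+1}) if γ(x) = ∅, and otherwise Rₙ₊₁(x) = {(I(x),σ)·u | (σ,y) ∈ γ(x), u ∈ Rₙ(y)}, where prefixing preserves the summand (ongoing words stay ongoing, terminated words stay terminated). Then for all states x, y of finitely branching LTSs: x and y are ready trace equivalent if and only if Rₙ(x) = Rₙ(y) for all n < ω.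 Moreover, explicitly, the ongoing part of Rₙ(x) is {(I(x₀),σ₁)…(I(x_{n-1}),σₙ) | x = x₀ →σ₁ ⋯ →σₙ xₙ} and the terminated part is {(I(x₀),σ₁)…(I(x_{i-1}),σᵢ) | i < n, x = x₀ →σ₁ ⋯ →σᵢ xᵢ, I(xᵢ) = ∅}. -/
universe u v

/-- The ready set `I(x)` of a state. -/
def readySet {A : Type u} {X : Type v} [DecidableEq A]
    (γ : X → Finset (A × X)) (x : X) : Finset A :=
  (γ x).image Prod.fst

/-- `ReadyPath γ x l z` : there is a path from `x` to `z` along transitions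
`x = x₀ →σ₁ x₁ →σ₂ ⋯ →σₙ xₙ = z` such that `l` is the list of pairs
`(I(x₀), σ₁), …, (I(x_{n-1}), σₙ)` recording the ready set of each source state. -/
inductive ReadyPath {A : Type u} {X : Type v} [DecidableEq A] (γ : X → Finset (A × X)) :
    X → List (Finset A × A) → X → Prop
  | nil (x : X) : ReadyPath γ x [] x
  | cons {x : X} {σ : A} {y : X} {l : List (Finset A × A)} {z : X} :
      (σ, y) ∈ γ x → ReadyPath γ y l z → ReadyPath γ x ((readySet γ x, σ) :: l) z

/-- The set `RT(x)` of ready traces of `x`. -/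
def RT {A : Type u} {X : Type v} [DecidableEq A] (γ : X → Finset (A × X)) (x : X) :
    Set (List (Finset A × A) × Finset A) :=
  {p | ∃ z, ReadyPath γ x p.1 z ∧ p.2 = readySet γ z}

/-- The ready-trace sequence `Rₙ`, valued in subsets of
`(𝒫ω𝒜×𝒜)^* ⊎ (𝒫ω𝒜×𝒜)^*`, where `Sum.inl` words are ongoing and `Sum.inr` words are
terminated (ended in deadlock). -/
def readyTraceSeq {A : Type u} {X : Type v} [DecidableEq A] [DecidableEq X]
    (γ : X → Finset (A × X)) :
    ℕ → X → Set (List (Finset A × A) ⊕ List (Finset A × A))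
  | 0, _ => {Sum.inl []}
  | n + 1, x =>
      if γ x = ∅ then {Sum.inr []}
      else
        {p | (∃ σ y u, (σ, y) ∈ γ x ∧ Sum.inl u ∈ readyTraceSeq γ n y ∧
                p = Sum.inl ((readySet γ x, σ) :: u)) ∨
             (∃ σ y u, (σ, y) ∈ γ x ∧ Sum.inr u ∈ readyTraceSeq γ n y ∧
                p = Sum.inr ((readySet γ x, σ) :: u))}

section Aux

variable {A : Type u} {X : Type v} [DecidableEq A]

lemma ReadyPath.eq_of_nil {γ : X → Finset (A × X)} {x z : X}
    (h : ReadyPath γ x [] z) : z = x := by cases h; rfl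

lemma ReadyPath.append_single {γ : X → Finset (A × X)} {x w z : X}
    {l : List (Finset A × A)} {σ : A}
    (h : ReadyPath γ x l w) (h2 : (σ, z) ∈ γ w) :
    ReadyPath γ x (l ++ [(readySet γ w, σ)]) z := by
  induction h with
  | nil x => exact ReadyPath.cons h2 (ReadyPath.nil z)
  | cons ht hp ih => exact ReadyPath.cons ht (ih h2)

lemma ReadyPath.exists_of_append_single {γ : X → Finset (A × X)} {x z : X}
    {l : List (Finset A × A)} {B : Finset A} {σ : A}
    (h : ReadyPath γ x (l ++ [(B, σ)]) z) :
    ∃ w, ReadyPath γ x l w ∧ readySet γ w = B ∧ (σ, z) ∈ γ w := by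
  induction l generalizing x with
  | nil =>
    simp only [List.nil_append] at h
    cases h with
    | cons ht hp =>
      obtain rfl := hp.eq_of_nil
      exact ⟨x, ReadyPath.nil x, rfl, ht⟩
  | cons a l ih =>
    cases h with
    | cons ht hp =>
      obtain ⟨w, hw, hB, hz⟩ := ih hp
      exact ⟨w, ReadyPath.cons ht hw, hB, hz⟩

lemma readySet_eq_empty {γ : X → Finset (A × X)} {x : X} :
    readySet γ x = ∅ ↔ γ x = ∅ := by
  simp [readySet, Finset.image_eq_empty]

lemma readyTraceSeq_eq {X : Type v} [DecidableEq X] (γ : X → Finset (A × X))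
    (n : ℕ) (x : X) :
    readyTraceSeq γ n x =
      {p | (∃ l, l.length = n ∧ (∃ z, ReadyPath γ x l z) ∧ p = Sum.inl l) ∨
           (∃ l, l.length < n ∧ (∃ z, ReadyPath γ x l z ∧ readySet γ z = ∅) ∧
              p = Sum.inr l)} := by
  induction n generalizing x with
  | zero =>
    ext p
    simp only [readyTraceSeq, Set.mem_singleton_iff, Set.mem_setOf_eq]
    constructor
    · rintro rfl
      exact Or.inl ⟨[], rfl, ⟨x, ReadyPath.nil x⟩, rfl⟩
    · rintro (⟨l, hl, _, rfl⟩ | ⟨l, hl, _, rfl⟩)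
      · rw [List.length_eq_zero_iff] at hl; subst hl; rfl
      · omega
  | succ n ih =>
    ext p
    by_cases h : γ x = ∅
    · simp only [readyTraceSeq, h, if_pos, Set.mem_singleton_iff, Set.mem_setOf_eq]
      constructor
      · rintro rfl
        exact Or.inr ⟨[], Nat.succ_pos n, ⟨x, ReadyPath.nil x, readySet_eq_empty.mpr h⟩, rfl⟩
      · rintro (⟨l, hl, ⟨z, hz⟩, rfl⟩ | ⟨l, _, ⟨z, hz, _⟩, rfl⟩)
        · cases hz with
          | nil => simp at hl
          | cons ht _ => rw [h] at ht; exact absurd ht (Finset.notMem_empty _)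
        · cases hz with
          | nil => rfl
          | cons ht _ => rw [h] at ht; exact absurd ht (Finset.notMem_empty _)
    · simp only [readyTraceSeq, h, if_neg, not_false_iff, Set.mem_setOf_eq, ih]
      constructor
      · rintro (⟨σ, y, u, hty, hmem, rfl⟩ | ⟨σ, y, u, hty, hmem, rfl⟩)
        · rcases hmem with ⟨l, hl, ⟨z, hz⟩, hu⟩ | ⟨l, hl, _, hu⟩
          · obtain rfl : u = l := by injection hu
            exact Or.inl ⟨(readySet γ x, σ) :: u, by simp [hl],
              ⟨z, ReadyPath.cons hty hz⟩, rfl⟩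
          · exact absurd hu (by simp)
        · rcases hmem with ⟨l, hl, _, hu⟩ | ⟨l, hl, ⟨z, hz, hzE⟩, hu⟩
          · exact absurd hu (by simp)
          · obtain rfl : u = l := by injection hu
            exact Or.inr ⟨(readySet γ x, σ) :: u, by simp only [List.length_cons]; omega,
              ⟨z, ReadyPath.cons hty hz, hzE⟩, rfl⟩
      · rintro (⟨l, hl, ⟨z, hz⟩, rfl⟩ | ⟨l, hl, ⟨z, hz, hzE⟩, rfl⟩)
        · cases hz with
          | nil => simp at hl
          | @cons _ σ y u _ ht hp =>
            exact Or.inl ⟨σ, y, u, ht, Or.inl ⟨u, by simpa using hl, ⟨z, hp⟩, rfl⟩, rfl⟩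
        · cases hz with
          | nil => exact absurd (readySet_eq_empty.mp hzE) h
          | @cons _ σ y u _ ht hp =>
            exact Or.inr ⟨σ, y, u, ht, Or.inr ⟨u,
              by simp only [List.length_cons] at hl; omega,
              ⟨z, hp, hzE⟩, rfl⟩, rfl⟩

lemma exists_path_iff {γ : X → Finset (A × X)} {x : X} {l : List (Finset A × A)} :
    (∃ z, ReadyPath γ x l z) ↔ ∃ B, (l, B) ∈ RT γ x := by
  constructor
  · rintro ⟨z, hz⟩; exact ⟨readySet γ z, z, hz, rfl⟩
  · rintro ⟨B, z, hz, _⟩; exact ⟨z, hz⟩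

lemma deadlock_iff {γ : X → Finset (A × X)} {x : X} {l : List (Finset A × A)} :
    (∃ z, ReadyPath γ x l z ∧ readySet γ z = ∅) ↔ (l, (∅ : Finset A)) ∈ RT γ x := by
  constructor
  · rintro ⟨z, hz, hE⟩; exact ⟨z, hz, hE.symm⟩
  · rintro ⟨z, hz, hE⟩; exact ⟨z, hz, hE.symm⟩

lemma mem_RT_iff {X : Type v} [DecidableEq X] {γ : X → Finset (A × X)} {x : X}
    {l : List (Finset A × A)} {B : Finset A} {σ : A} (hσ : σ ∈ B) :
    (l, B) ∈ RT γ x ↔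
      Sum.inl (l ++ [(B, σ)]) ∈ readyTraceSeq γ (l.length + 1) x := by
  rw [readyTraceSeq_eq]
  constructor
  · rintro ⟨z, hz, rfl⟩
    obtain ⟨⟨σ', w⟩, hw, rfl⟩ := Finset.mem_image.mp hσ
    exact Or.inl ⟨l ++ [(readySet γ z, σ')], by simp, ⟨w, hz.append_single hw⟩, rfl⟩
  · rintro (⟨l', _, ⟨z, hz⟩, hl'⟩ | ⟨l', _, _, hl'⟩)
    · obtain rfl : l ++ [(B, σ)] = l' := by injection hl'
      obtain ⟨w, hw, hB, _⟩ := hz.exists_of_append_single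
      exact ⟨w, hw, hB.symm⟩
    · exact absurd hl' (by simp)

lemma mem_RT_empty_iff {X : Type v} [DecidableEq X] {γ : X → Finset (A × X)} {x : X}
    {l : List (Finset A × A)} :
    (l, (∅ : Finset A)) ∈ RT γ x ↔
      Sum.inr l ∈ readyTraceSeq γ (l.length + 1) x := by
  rw [← deadlock_iff, readyTraceSeq_eq]
  constructor
  · rintro ⟨z, hz, hE⟩
    exact Or.inr ⟨l, Nat.lt_succ_self _, ⟨z, hz, hE⟩, rfl⟩
  · rintro (⟨l', _, _, hl'⟩ | ⟨l', _, ⟨z, hz, hE⟩, hl'⟩)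
    · exact absurd hl' (by simp)
    · obtain rfl : l = l' := by injection hl'
      exact ⟨z, hz, hE⟩

end Aux


/-- Two states are ready trace equivalent iff they have the same ready-trace
sequences `Rₙ` for all `n`; moreover the ongoing part of `Rₙ(x)` consists of the
ready-annotated length-`n` paths from `x` and the terminated part of the
ready-annotated paths of length `< n` from `x` ending in deadlock. -/
theorem readyTraceSeq_characterization {A : Type u} [Fintype A] [DecidableEq A] :
    (∀ {X Y : Type v} [DecidableEq X] [DecidableEq Y]
      (γ : X → Finset (A × X)) (δ : Y → Finset (A × Y)) (x : X) (y : Y),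
      RT γ x = RT δ y ↔ ∀ n : ℕ, readyTraceSeq γ n x = readyTraceSeq δ n y) ∧
    (∀ {X : Type v} [DecidableEq X] (γ : X → Finset (A × X)) (n : ℕ) (x : X),
      readyTraceSeq γ n x =
        {p | (∃ l, l.length = n ∧ (∃ z, ReadyPath γ x l z) ∧ p = Sum.inl l) ∨
             (∃ l, l.length < n ∧ (∃ z, ReadyPath γ x l z ∧ readySet γ z = ∅) ∧
                p = Sum.inr l)}) := by
  constructor
  · intro X Y _ _ γ δ x y
    constructor
    · intro h n
      rw [readyTraceSeq_eq, readyTraceSeq_eq]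
      ext p
      simp only [Set.mem_setOf_eq]
      constructor
      · rintro (⟨l, hl, hp, rfl⟩ | ⟨l, hl, hp, rfl⟩)
        · exact Or.inl ⟨l, hl, exists_path_iff.mpr (h ▸ exists_path_iff.mp hp), rfl⟩
        · exact Or.inr ⟨l, hl, deadlock_iff.mpr (h ▸ deadlock_iff.mp hp), rfl⟩
      · rintro (⟨l, hl, hp, rfl⟩ | ⟨l, hl, hp, rfl⟩)
        · exact Or.inl ⟨l, hl, exists_path_iff.mpr (h ▸ exists_path_iff.mp hp), rfl⟩
        · exact Or.inr ⟨l, hl, deadlock_iff.mpr (h ▸ deadlock_iff.mp hp), rfl⟩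
    · intro h
      ext ⟨l, B⟩
      rcases eq_or_ne B (∅ : Finset A) with rfl | hB
      · rw [mem_RT_empty_iff, mem_RT_empty_iff, h]
      · obtain ⟨σ, hσ⟩ := Finset.nonempty_iff_ne_empty.mpr hB
        rw [mem_RT_iff hσ, mem_RT_iff hσ, h]
  · intro X _ γ n x
    exact readyTraceSeq_eq γ n x
end
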